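/- Let b be an α-regular Volterra process and φ = Σ_{i=1}^{n} φ_i 1_{[t_i,t_{i+1})} a step function on [0,T] (with 0 = t₁ < … < t_{n+1} = T). Then the elementary integral i_T(φ) = Σ_{i=1}^{n} φ_i (b_{t_{i+1}} − b_{t_i}) satisfies the Itô-type isometry ‖i_T(φ)‖²_{L²(Ω)} = ∫₀^T (∫_r^T φ(u) ∂K/∂u(u,r) du)² dr = ‖𝒦*_T φ‖²_{L²(0,T)}. -/

import Mathlib

open MeasureTheory ProbabilityTheory Filter Set Topology
open scoped ENNReal NNReal RealInnerProductSpace BigOperators Classical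

noncomputable section

/-! ### Wiener chaos -/

/-- The `n`-th Hermite polynomial function
`H_n(x) = ((−1)^n/n!) e^{x²/2} dⁿ/dxⁿ (e^{−x²/2})`. -/
def hermiteFun (n : ℕ) (x : ℝ) : ℝ :=
  ((-1 : ℝ) ^ n / n.factorial) * Real.exp (x ^ 2 / 2) *
    iteratedDeriv n (fun y => Real.exp (-(y ^ 2) / 2)) x

/-- `W` is an `H`-isonormal Gaussian process on `(Ω, P)`. -/
structure IsIsonormal {H : Type*} [NormedAddCommGroup H] [InnerProductSpace ℝ H]
    {Ω : Type*} [MeasurableSpace Ω] (P : Measure Ω) (W : H → Ω → ℝ) : Prop where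
  meas : ∀ h, Measurable (W h)
  gaussian : ∀ h : H, P.map (W h) = gaussianReal 0 (‖h‖₊ ^ 2)
  cov : ∀ h₁ h₂ : H, ∫ ω, W h₁ ω * W h₂ ω ∂P = ⟪h₁, h₂⟫

/-- The `n`-th Wiener chaos of `W`: the closed linear subspace of `L²(Ω)` generated by
`{H_n(W(h)) : h ∈ H, ‖h‖ = 1}`. -/
def wienerChaos {H : Type*} [NormedAddCommGroup H] [InnerProductSpace ℝ H]
    {Ω : Type*} [MeasurableSpace Ω] (P : Measure Ω) (W : H → Ω → ℝ) (n : ℕ) :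
    Set (Lp ℝ 2 P) :=
  closure (Submodule.span ℝ
    {f : Lp ℝ 2 P | ∃ h : H, ‖h‖ = 1 ∧ ∀ᵐ ω ∂P, f ω = hermiteFun n (W h ω)} : Set (Lp ℝ 2 P))

/-- The finite direct sum of Wiener chaoses `𝓗 := ⊕_{i=0}^m 𝓗_i` as a subset of `L²(Ω)`. -/
def chaosSum {H : Type*} [NormedAddCommGroup H] [InnerProductSpace ℝ H]
    {Ω : Type*} [MeasurableSpace Ω] (P : Measure Ω) (W : H → Ω → ℝ) (m : ℕ) :
    Set (Lp ℝ 2 P) :=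
  {f | ∃ g : Fin (m + 1) → Lp ℝ 2 P,
    (∀ i : Fin (m + 1), g i ∈ wienerChaos P W (i : ℕ)) ∧ f = ∑ i, g i}

/-! ### γ-radonifying operators -/

/-- A centered Gaussian probability measure on a Banach space. -/
def IsCenteredGaussianMeasure {E : Type*} [NormedAddCommGroup E] [NormedSpace ℝ E]
    [MeasurableSpace E] (ν : Measure E) : Prop :=
  IsProbabilityMeasure ν ∧ ∀ φ : E →L[ℝ] ℝ, ∃ v : ℝ≥0, ν.map φ = gaussianReal 0 v

/-- `R : U → E` is γ-radonifying: there is a centered Gaussian probability measure `ν` on `E`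
with `∫ φ(x)² ν(dx) = ‖φ ∘ R‖²` for all `φ ∈ E*`. -/
def IsGammaRadonifying {U : Type*} [NormedAddCommGroup U] [InnerProductSpace ℝ U]
    {E : Type*} [NormedAddCommGroup E] [NormedSpace ℝ E] [MeasurableSpace E]
    (R : U →L[ℝ] E) : Prop :=
  ∃ ν : Measure E, IsCenteredGaussianMeasure ν ∧
    ∀ φ : E →L[ℝ] ℝ, ∫ x, (φ x) ^ 2 ∂ν = ‖φ.comp R‖ ^ 2

/-- The γ-radonifying norm `‖R‖_{γ(U,E)} = (∫_E ‖x‖² ν_R(dx))^{1/2}` (and `0` if `R` is not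
γ-radonifying). -/
def gammaNorm {U : Type*} [NormedAddCommGroup U] [InnerProductSpace ℝ U]
    {E : Type*} [NormedAddCommGroup E] [NormedSpace ℝ E] [MeasurableSpace E]
    (R : U →L[ℝ] E) : ℝ :=
  if h : IsGammaRadonifying R then Real.sqrt (∫ x, ‖x‖ ^ 2 ∂h.choose) else 0

/-! ### Volterra kernels and processes -/

/-- An `α`-regular Volterra kernel. -/
structure IsVolterraKernel (α : ℝ) (K : ℝ → ℝ → ℝ) : Prop where
  meas : Measurable (Function.uncurry K)
  nonneg : ∀ t r, 0 ≤ K t r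
  zero_zero : K 0 0 = 0
  of_lt : ∀ t r, 0 ≤ t → t < r → K t r = 0
  lim_zero : ∀ r, 0 ≤ r → Tendsto (fun t => K t r) (𝓝[>] r) (𝓝 0)
  sq_integrable : ∀ t, 0 ≤ t → IntegrableOn (fun r => (K t r) ^ 2) (Set.Ioc 0 t)
  smooth : ∀ r T : ℝ, 0 ≤ r → 0 < T → ContDiffOn ℝ 1 (fun u => K u r) (Set.Ioo r T)
  deriv_bound : ∀ T > 0, ∃ C > 0, ∀ r u : ℝ, 0 < r → r < u → u ≤ T →
    |deriv (fun v => K v r) u| ≤ C * (u - r) ^ (α - 1) * (u / r) ^ α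

/-- An `α`-regular Volterra process with kernel `K`: a centered continuous process,
starting from `0`, with covariance `E(b_s b_t) = ∫₀^{s∧t} K(s,r) K(t,r) dr`. -/
structure IsVolterraProcess (α : ℝ) (K : ℝ → ℝ → ℝ) {Ω : Type*} [MeasurableSpace Ω]
    (P : Measure Ω) (b : ℝ → Ω → ℝ) : Prop where
  kernel : IsVolterraKernel α K
  meas : ∀ t, Measurable (b t)
  start : ∀ᵐ ω ∂P, b 0 ω = 0
  cont : ∀ᵐ ω ∂P, ContinuousOn (fun t => b t ω) (Set.Ici 0)
  memL2 : ∀ t, 0 ≤ t → MemLp (b t) 2 P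
  centered : ∀ t, 0 ≤ t → ∫ ω, b t ω ∂P = 0
  cov : ∀ s t, 0 ≤ s → 0 ≤ t →
    ∫ ω, b s ω * b t ω ∂P = ∫ r in Set.Ioc 0 (min s t), K s r * K t r

/-- The operator `(𝒦*_T φ)(r) = ∫_r^T φ(u) ∂K/∂u(u,r) du`. -/
def kernelStar (T : ℝ) (K : ℝ → ℝ → ℝ) (φ : ℝ → ℝ) (r : ℝ) : ℝ :=
  ∫ u in Set.Ioc r T, φ u * deriv (fun v => K v r) u

/-- The space of (deterministic) real step functions on `[0,T]`, as the linear span of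
indicators of intervals `[s,t) ⊆ [0,T]`. -/
def stepFunctions (T : ℝ) : Submodule ℝ (ℝ → ℝ) :=
  Submodule.span ℝ
    {f | ∃ s t : ℝ, 0 ≤ s ∧ s ≤ t ∧ t ≤ T ∧ f = Set.indicator (Set.Ico s t) fun _ => (1 : ℝ)}

/-- The indicator of `[s,t)` as a step function on `[0,T]`. -/
def stepGen {T : ℝ} (s t : ℝ) (hs : 0 ≤ s) (hst : s ≤ t) (htT : t ≤ T) : stepFunctions T :=
  ⟨Set.indicator (Set.Ico s t) fun _ => (1 : ℝ),
    Submodule.subset_span ⟨s, t, hs, hst, htT, rfl⟩⟩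

/-- `𝒟` (with the given inner product space structure and the linear map `ι` from step
functions) is the completion of the step functions on `[0,T]` under
`⟪f,g⟫_𝒟 = ⟪𝒦*_T f, 𝒦*_T g⟫_{L²(0,T)}`: `ι` has dense range and realizes this inner
product. -/
def IsVolterraDomain {𝓓 : Type*} [NormedAddCommGroup 𝓓] [InnerProductSpace ℝ 𝓓]
    [CompleteSpace 𝓓] (T : ℝ) (K : ℝ → ℝ → ℝ) (ι : stepFunctions T →ₗ[ℝ] 𝓓) : Prop :=
  DenseRange ι ∧ ∀ f g : stepFunctions T,
    ⟪ι f, ι g⟫ = ∫ r in Set.Ioc 0 T, kernelStar T K (f : ℝ → ℝ) r * kernelStar T K (g : ℝ → ℝ) r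

/-- `d ∈ 𝒟` is represented by the (deterministic) function `g : [0,T] → ℝ`; by density of the
range of `ι` this determines `d` uniquely. -/
def RepresentsIn {𝓓 : Type*} [NormedAddCommGroup 𝓓] [InnerProductSpace ℝ 𝓓]
    [CompleteSpace 𝓓] (T : ℝ) (K : ℝ → ℝ → ℝ) (ι : stepFunctions T →ₗ[ℝ] 𝓓)
    (g : ℝ → ℝ) (d : 𝓓) : Prop :=
  (∀ f : stepFunctions T,
    ⟪d, ι f⟫ = ∫ r in Set.Ioc 0 T, kernelStar T K g r * kernelStar T K (f : ℝ → ℝ) r) ∧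
  ‖d‖ ^ 2 = ∫ r in Set.Ioc 0 T, (kernelStar T K g r) ^ 2

end

/-!
Both sides are quadratic forms in the coefficients `c`. By the covariance structure, the Gram
matrix of the increments `b_{t_{i+1}} − b_{t_i}` in `L²(Ω)` is the Gram matrix in `L²(0,T)` of
the kernel increments `K(t_{i+1},·) − K(t_i,·)`. On the other hand, `𝒦*_T` maps the indicator
of `[a,s)` to `K(s,·) − K(a,·)` off `{a, s}`, by the fundamental theorem of calculus for
`u ↦ K(u,r)`, improper at `u = r` where `K(u,r) → 0` and `∂K/∂u` is integrable thanks to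
`α > 0`.
-/

section SquareIntegrable

variable {Ω : Type*} [MeasurableSpace Ω] {μ : Measure Ω}

lemma integral_sub_mul_sub {f g h k : Ω → ℝ} (hf : MemLp f 2 μ) (hg : MemLp g 2 μ)
    (hh : MemLp h 2 μ) (hk : MemLp k 2 μ) :
    ∫ ω, (f ω - g ω) * (h ω - k ω) ∂μ =
      ∫ ω, f ω * h ω ∂μ - ∫ ω, f ω * k ω ∂μ - (∫ ω, g ω * h ω ∂μ - ∫ ω, g ω * k ω ∂μ) := by
  have hI {p q : Ω → ℝ} (hp : MemLp p 2 μ) (hq : MemLp q 2 μ) :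
      Integrable (fun ω => p ω * q ω) μ :=
    hp.integrable_mul hq
  simp_rw [sub_mul, mul_sub]
  rw [integral_sub, integral_sub (hI hf hh) (hI hf hk), integral_sub (hI hg hh) (hI hg hk)]
  exacts [(hI hf hh).sub (hI hf hk), (hI hg hh).sub (hI hg hk)]

lemma integral_sum_mul_sq {ι : Type*} [Fintype ι] {f : ι → Ω → ℝ} (hf : ∀ i, MemLp (f i) 2 μ)
    (c : ι → ℝ) :
    ∫ ω, (∑ i, c i * f i ω) ^ 2 ∂μ = ∑ i, ∑ j, c i * c j * ∫ ω, f i ω * f j ω ∂μ := by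
  have hprod (i j : ι) : Integrable (fun ω => c i * c j * (f i ω * f j ω)) μ :=
    ((hf i).integrable_mul (hf j)).const_mul _
  calc ∫ ω, (∑ i, c i * f i ω) ^ 2 ∂μ
      = ∫ ω, ∑ i, ∑ j, c i * c j * (f i ω * f j ω) ∂μ := by
        congr 1 with ω
        rw [sq, Finset.sum_mul_sum]
        exact Finset.sum_congr rfl fun i _ => Finset.sum_congr rfl fun j _ => by ring
    _ = ∑ i, ∑ j, c i * c j * ∫ ω, f i ω * f j ω ∂μ := by
        rw [integral_finsetSum _ fun i _ => integrable_finsetSum _ fun j _ => hprod i j]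
        refine Finset.sum_congr rfl fun i _ => ?_
        rw [integral_finsetSum _ fun j _ => hprod i j]
        simp_rw [integral_const_mul]

end SquareIntegrable

lemma kernelStar_sum {ι : Type*} [Fintype ι] {T r : ℝ} {K : ℝ → ℝ → ℝ} {f : ι → ℝ → ℝ}
    (hf : ∀ i, IntegrableOn (fun u => f i u * deriv (fun v => K v r) u) (Ioc r T))
    (c : ι → ℝ) :
    kernelStar T K (fun u => ∑ i, c i * f i u) r = ∑ i, c i * kernelStar T K (f i) r := by
  unfold kernelStar
  simp_rw [Finset.sum_mul, mul_assoc]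
  rw [integral_finsetSum _ fun i _ => (hf i).const_mul (c i)]
  simp_rw [integral_const_mul]

namespace IsVolterraKernel

variable {α : ℝ} {K : ℝ → ℝ → ℝ}

lemma measurable_right (hK : IsVolterraKernel α K) (s : ℝ) : Measurable (K s) :=
  hK.meas.comp measurable_prodMk_left

lemma memLp_two (hK : IsVolterraKernel α K) {s : ℝ} (hs : 0 ≤ s) (T : ℝ) :
    MemLp (K s) 2 (volume.restrict (Ioc 0 T)) := by
  refine (memLp_two_iff_integrable_sq (hK.measurable_right s).aestronglyMeasurable).2 ?_
  refine (hK.sq_integrable s hs).of_forall_sdiff_eq_zero measurableSet_Ioc fun r hr => ?_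
  rw [hK.of_lt s r hs (lt_of_not_ge fun h => hr.2 ⟨hr.1.1, h⟩), zero_pow two_ne_zero]

lemma differentiableAt (hK : IsVolterraKernel α K) {r x : ℝ} (hr : 0 ≤ r) (hx : r < x) :
    DifferentiableAt ℝ (fun v => K v r) x :=
  ((hK.smooth r (x + 1) hr (by linarith)).differentiableOn one_ne_zero).differentiableAt
    (Ioo_mem_nhds hx (by linarith))

lemma integrableOn_deriv (hK : IsVolterraKernel α K) (hα : 0 < α) {r : ℝ} (hr : 0 < r)
    (T : ℝ) : IntegrableOn (deriv (fun v => K v r)) (Ioc r T) := by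
  rcases le_or_gt T r with hT | hT
  · rw [Ioc_eq_empty hT.not_gt]
    exact integrableOn_empty
  obtain ⟨C, hC, hbound⟩ := hK.deriv_bound T (hr.trans hT)
  have hsing : IntegrableOn (fun u => (u - r) ^ (α - 1)) (Ioc r T) := by
    have := (intervalIntegral.intervalIntegrable_rpow' (by linarith : -1 < α - 1)
      (a := 0) (b := T - r)).comp_sub_right r
    simp only [zero_add, sub_add_cancel] at this
    exact (intervalIntegrable_iff_integrableOn_Ioc_of_le hT.le).1 this
  refine (hsing.const_mul (C * (T / r) ^ α)).mono' (measurable_deriv _).aestronglyMeasurable ?_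
  filter_upwards [ae_restrict_mem measurableSet_Ioc] with u ⟨hru, huT⟩
  -- `(u/r)^α ≤ (T/r)^α` leaves only the integrable singularity `(u - r)^(α-1)`
  calc ‖deriv (fun v => K v r) u‖ ≤ C * (u - r) ^ (α - 1) * (u / r) ^ α := hbound r u hr hru huT
    _ ≤ C * (u - r) ^ (α - 1) * (T / r) ^ α := by
        refine mul_le_mul_of_nonneg_left ?_
          (mul_nonneg hC.le (Real.rpow_nonneg (sub_nonneg.2 hru.le) _))
        exact Real.rpow_le_rpow (div_nonneg (hr.trans hru).le hr.le) (by gcongr) hα.le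
    _ = C * (T / r) ^ α * (u - r) ^ (α - 1) := by ring

lemma integral_deriv_Ioc_self (hK : IsVolterraKernel α K) (hα : 0 < α) {r s : ℝ} (hr : 0 < r)
    (hrs : r < s) : ∫ u in Ioc r s, deriv (fun v => K v r) u = K s r := by
  have hderiv (x : ℝ) (hx : r < x) : HasDerivAt (fun v => K v r) (deriv (fun v => K v r) x) x :=
    (hK.differentiableAt hr.le hx).hasDerivAt
  rw [← intervalIntegral.integral_of_le hrs.le,
    intervalIntegral.integral_eq_sub_of_hasDerivAt_of_tendsto hrs (fun x hx => hderiv x hx.1)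
      ((intervalIntegrable_iff_integrableOn_Ioc_of_le hrs.le).2 (hK.integrableOn_deriv hα hr s))
      (hK.lim_zero r hr.le) ((hderiv s hrs).continuousAt.tendsto.mono_left nhdsWithin_le_nhds),
    sub_zero]

lemma integral_deriv_Ioc (hK : IsVolterraKernel α K) (hα : 0 < α) {r a s : ℝ} (hr : 0 < r)
    (hra : r < a) (has : a ≤ s) :
    ∫ u in Ioc a s, deriv (fun v => K v r) u = K s r - K a r := by
  rw [← intervalIntegral.integral_of_le has]
  refine intervalIntegral.integral_eq_sub_of_hasDerivAt
    (fun x hx => (hK.differentiableAt hr.le (hra.trans_le (uIcc_of_le has ▸ hx).1)).hasDerivAt)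
    ((intervalIntegrable_iff_integrableOn_Ioc_of_le has).2
      ((hK.integrableOn_deriv hα hr s).mono_set (Ioc_subset_Ioc_left hra.le)))

lemma integrableOn_indicator_mul_deriv (hK : IsVolterraKernel α K) (hα : 0 < α) {r : ℝ}
    (hr : 0 < r) (T : ℝ) {A : Set ℝ} (hA : MeasurableSet A) :
    IntegrableOn (fun u => A.indicator (fun _ => (1 : ℝ)) u * deriv (fun v => K v r) u)
      (Ioc r T) := by
  simp_rw [← indicator_mul_left, one_mul]
  exact (hK.integrableOn_deriv hα hr T).indicator hA

lemma kernelStar_indicator_Ico (hK : IsVolterraKernel α K) (hα : 0 < α) {T a s r : ℝ}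
    (ha : 0 ≤ a) (has : a ≤ s) (hsT : s ≤ T) (hr : 0 < r) (hra : r ≠ a) (hrs : r ≠ s) :
    kernelStar T K ((Ico a s).indicator fun _ => 1) r = K s r - K a r := by
  unfold kernelStar
  simp_rw [← indicator_mul_left, one_mul]
  rw [setIntegral_indicator measurableSet_Ico]
  rcases hra.lt_or_gt with hra | har
  · have hsub : Ico a s ⊆ Ioc r T := fun u hu => ⟨hra.trans_le hu.1, hu.2.le.trans hsT⟩
    rw [inter_eq_self_of_subset_right hsub, integral_Ico_eq_integral_Ioo, ← integral_Ioc_eq_integral_Ioo,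
      hK.integral_deriv_Ioc hα hr hra has]
  rcases hrs.lt_or_gt with hrs | hsr
  · have hIoo : Ioc r T ∩ Ico a s = Ioo r s := by
      ext u
      simp only [mem_inter_iff, mem_Ioc, mem_Ico, mem_Ioo]
      constructor
      · rintro ⟨⟨hru, _⟩, _, hus⟩
        exact ⟨hru, hus⟩
      · rintro ⟨hru, hus⟩
        exact ⟨⟨hru, hus.le.trans hsT⟩, har.le.trans hru.le, hus⟩
    rw [hIoo, ← integral_Ioc_eq_integral_Ioo, hK.integral_deriv_Ioc_self hα hr hrs,
      hK.of_lt a r ha har, sub_zero]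
  · have hempty : Ioc r T ∩ Ico a s = ∅ :=
      eq_empty_of_forall_notMem fun u hu => (hsr.trans hu.1.1).not_gt hu.2.2
    rw [hempty, hK.of_lt s r (ha.trans has) hsr, hK.of_lt a r ha (has.trans_lt hsr),
      Measure.restrict_empty, integral_zero_measure, sub_zero]

lemma ae_kernelStar_step_eq (hK : IsVolterraKernel α K) (hα : 0 < α) {T : ℝ} {n : ℕ}
    {t : Fin (n + 1) → ℝ} (ht : Monotone t) (ht0 : 0 ≤ t 0) (htT : t (Fin.last n) ≤ T)
    (c : Fin n → ℝ) :
    ∀ᵐ r ∂(volume.restrict (Ioc 0 T)),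
      kernelStar T K (fun u => ∑ i : Fin n,
          c i * (Ico (t i.castSucc) (t i.succ)).indicator (fun _ => (1 : ℝ)) u) r =
        ∑ i : Fin n, c i * (K (t i.succ) r - K (t i.castSucc) r) := by
  have hgrid : ∀ᵐ r ∂(volume.restrict (Ioc 0 T)), r ∉ range t :=
    ae_restrict_of_ae (measure_eq_zero_iff_ae_notMem.1 ((finite_range t).measure_zero _))
  filter_upwards [hgrid, ae_restrict_mem measurableSet_Ioc] with r hr ⟨hr0, _⟩
  rw [kernelStar_sum (fun i => hK.integrableOn_indicator_mul_deriv hα hr0 T measurableSet_Ico)]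
  refine Finset.sum_congr rfl fun i _ => congrArg (c i * ·) ?_
  exact hK.kernelStar_indicator_Ico hα (ht0.trans (ht (Fin.zero_le _)))
    (ht Fin.castSucc_lt_succ.le) ((ht (Fin.le_last _)).trans htT) hr0
    (fun h => hr ⟨_, h.symm⟩) (fun h => hr ⟨_, h.symm⟩)

end IsVolterraKernel

namespace IsVolterraProcess

variable {α : ℝ} {K : ℝ → ℝ → ℝ} {Ω : Type*} [MeasurableSpace Ω] {P : Measure Ω}
  {b : ℝ → Ω → ℝ}

lemma integral_mul_eq_setIntegral (hb : IsVolterraProcess α K P b) {s u T : ℝ} (hs : 0 ≤ s)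
    (hu : 0 ≤ u) (hT : min s u ≤ T) :
    ∫ ω, b s ω * b u ω ∂P = ∫ r in Ioc 0 T, K s r * K u r := by
  rw [hb.cov s u hs hu, setIntegral_eq_of_subset_of_forall_sdiff_eq_zero measurableSet_Ioc
    (Ioc_subset_Ioc_right hT)]
  intro r ⟨⟨hr0, _⟩, hr⟩
  have hmin : min s u < r := lt_of_not_ge fun h => hr ⟨hr0, h⟩
  rcases min_lt_iff.1 hmin with hsr | hur
  · rw [hb.kernel.of_lt s r hs hsr, zero_mul]
  · rw [hb.kernel.of_lt u r hu hur, mul_zero]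

lemma integral_increment_mul (hb : IsVolterraProcess α K P b) {s s' u u' T : ℝ} (hs : 0 ≤ s)
    (hs' : 0 ≤ s') (hu : 0 ≤ u) (hu' : 0 ≤ u') (hsT : s ≤ T) (hs'T : s' ≤ T) :
    ∫ ω, (b s' ω - b s ω) * (b u' ω - b u ω) ∂P =
      ∫ r in Ioc 0 T, (K s' r - K s r) * (K u' r - K u r) := by
  have hK := hb.kernel
  rw [integral_sub_mul_sub (hb.memL2 s' hs') (hb.memL2 s hs) (hb.memL2 u' hu') (hb.memL2 u hu),
    integral_sub_mul_sub (hK.memLp_two hs' T) (hK.memLp_two hs T) (hK.memLp_two hu' T)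
      (hK.memLp_two hu T),
    hb.integral_mul_eq_setIntegral hs' hu' (min_le_of_left_le hs'T),
    hb.integral_mul_eq_setIntegral hs' hu (min_le_of_left_le hs'T),
    hb.integral_mul_eq_setIntegral hs hu' (min_le_of_left_le hsT),
    hb.integral_mul_eq_setIntegral hs hu (min_le_of_left_le hsT)]

end IsVolterraProcess

theorem elementary_integral_isometry_general
    {Ω : Type*} [MeasurableSpace Ω] (P : Measure Ω)
    (α : ℝ) (hα : α ∈ Set.Ioo (0 : ℝ) (1 / 2)) (K : ℝ → ℝ → ℝ) (b : ℝ → Ω → ℝ)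
    (hb : IsVolterraProcess α K P b)
    (T : ℝ) (n : ℕ) (t : Fin (n + 1) → ℝ) (c : Fin n → ℝ)
    (ht : StrictMono t) (ht0 : t 0 = 0) (htn : t (Fin.last n) = T)
    (φ : ℝ → ℝ)
    (hφ : φ = fun u => ∑ i : Fin n,
      c i * Set.indicator (Set.Ico (t i.castSucc) (t i.succ)) (fun _ => (1 : ℝ)) u) :
    ∫ ω, (∑ i : Fin n, c i * (b (t i.succ) ω - b (t i.castSucc) ω)) ^ 2 ∂P =
      ∫ r in Set.Ioc 0 T, (kernelStar T K φ r) ^ 2 := by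
  subst hφ
  have hK := hb.kernel
  have ht_nonneg (i : Fin (n + 1)) : 0 ≤ t i := ht0 ▸ ht.monotone (Fin.zero_le i)
  have ht_le (i : Fin (n + 1)) : t i ≤ T := htn ▸ ht.monotone (Fin.le_last i)
  have hstep := hK.ae_kernelStar_step_eq hα.1 ht.monotone ht0.ge htn.le c
  have hX := integral_sum_mul_sq (f := fun i ω => b (t i.succ) ω - b (t i.castSucc) ω)
    (fun i => (hb.memL2 _ (ht_nonneg _)).sub (hb.memL2 _ (ht_nonneg _))) c
  have hΔ := integral_sum_mul_sq (f := fun i r => K (t i.succ) r - K (t i.castSucc) r)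
    (fun i => (hK.memLp_two (ht_nonneg _) T).sub (hK.memLp_two (ht_nonneg _) T)) c
  beta_reduce at hX hΔ
  rw [integral_congr_ae (hstep.mono fun r hr => congrArg (· ^ 2) hr), hX, hΔ]
  refine Finset.sum_congr rfl fun i _ => Finset.sum_congr rfl fun j _ => ?_
  rw [hb.integral_increment_mul (ht_nonneg _) (ht_nonneg _) (ht_nonneg _) (ht_nonneg _)
    (ht_le _) (ht_le _)]

/-- Itô-type isometry for Volterra processes: for a step function
`φ = Σ_i φ_i 1_{[t_i, t_{i+1})}` on `[0,T]`, the elementary integral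
`i_T(φ) = Σ_i φ_i (b_{t_{i+1}} − b_{t_i})` satisfies
`‖i_T(φ)‖²_{L²(Ω)} = ∫₀^T (∫_r^T φ(u) ∂K/∂u(u,r) du)² dr = ‖𝒦*_T φ‖²_{L²(0,T)}`. -/
theorem elementary_integral_isometry
    {Ω : Type*} [MeasurableSpace Ω] (P : Measure Ω) [IsProbabilityMeasure P]
    (α : ℝ) (hα : α ∈ Set.Ioo (0 : ℝ) (1 / 2)) (K : ℝ → ℝ → ℝ) (b : ℝ → Ω → ℝ)
    (hb : IsVolterraProcess α K P b)
    (T : ℝ) (hT : 0 < T) (n : ℕ) (t : Fin (n + 1) → ℝ) (c : Fin n → ℝ)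
    (ht : StrictMono t) (ht0 : t 0 = 0) (htn : t (Fin.last n) = T)
    (φ : ℝ → ℝ)
    (hφ : φ = fun u => ∑ i : Fin n,
      c i * Set.indicator (Set.Ico (t i.castSucc) (t i.succ)) (fun _ => (1 : ℝ)) u) :
    ∫ ω, (∑ i : Fin n, c i * (b (t i.succ) ω - b (t i.castSucc) ω)) ^ 2 ∂P =
      ∫ r in Set.Ioc 0 T, (kernelStar T K φ r) ^ 2 :=
  elementary_integral_isometry_general P α hα K b hb T n t c ht ht0 htn φ hφ
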